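/- arXiv:1611.04510 — 2 statements merged into one kernel-verified Lean document; each statement's English description precedes it below -/
import Mathlib

section
/- Suppose Δt ≤ δ and the sequences w, y, b, d satisfy the discrete scheme. Write t_j = j·Δt. Then for all natural numbers n₀ < n: t_n‖w_n‖² + (1/3)·Σ_{j=n₀}^{n−1} t_{j+1}‖w_{j+1} − w_j‖² + Δt·Σ_{j=n₀}^{n−1} t_{j+1} ( 2ν‖g_V w_{j+1}‖² + (1/4)·δ‖g_Q y_{j+1}‖² ) ≤ t_{n₀}‖w_{n₀}‖² + Δt·Σ_{j=n₀}^{n−1} ( ‖w_j‖² + ‖w_{j+1}‖² ) + Δt·Σ_{j=n₀}^{n−1} t_{j+1} ( t_{j+1}‖b_j‖² + 4δ‖g_Q d_j‖² ). (This is the explicit-constant form of the time-weighted stability estimate (49) of Lemma 3.) -/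
/-!
Test the momentum equation at step `j` with `w_{j+1}` and multiply by `2 t_{j+1} Δt`. The time
derivative gives `t_{j+1}(‖w_{j+1}‖² - ‖w_j‖² + ‖w_{j+1} - w_j‖²)`, and constraint (ii) at step
`j + 1` turns the lagged pressure term into `δ‖g_Q y_{j+1}‖² - δ⟪g_Q y_{j+1}, g_Q(y_{j+1} - y_j)⟫`.
Differencing (ii) in time shows `δ‖g_Q(y_{j+1} - y_j)‖ ≤ ‖w_{j+1} - w_j‖`, so with `Δt ≤ δ` the
pressure increment is absorbed by two thirds of the numerical dissipation; the forcing terms are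
handled by Young's inequality. Since `t_{j+1} = t_j + Δt`, summing over `j` telescopes.
-/

open RealInnerProductSpace

section InnerProductSpace

variable {E F : Type*} [NormedAddCommGroup E] [InnerProductSpace ℝ E]
  [NormedAddCommGroup F] [InnerProductSpace ℝ F]

theorem two_mul_inner_sub_self (u v : E) :
    2 * ⟪u - v, u⟫ = ‖u‖ ^ 2 - ‖v‖ ^ 2 + ‖u - v‖ ^ 2 := by
  rw [norm_sub_sq_real, inner_sub_left, real_inner_self_eq_norm_sq, real_inner_comm]
  ring

theorem two_mul_inner_le_add_mul_sq {ε : ℝ} (hε : 0 < ε) (x y : E) :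
    2 * ⟪x, y⟫ ≤ ε * ‖x‖ ^ 2 + ε⁻¹ * ‖y‖ ^ 2 :=
  calc 2 * ⟪x, y⟫ ≤ 2 * ‖x‖ * ‖y‖ := by rw [mul_assoc]; gcongr; exact real_inner_le_norm x y
    _ ≤ ε * ‖x‖ ^ 2 + ε⁻¹ * ‖y‖ ^ 2 := two_mul_le_add_mul_sq hε

theorem mul_norm_le_of_inner_eq {δ : ℝ} {u v : E} (h : ⟪u, v⟫ = δ * ‖v‖ ^ 2) :
    δ * ‖v‖ ≤ ‖u‖ := by
  have : δ * ‖v‖ * ‖v‖ ≤ ‖u‖ * ‖v‖ := by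
    rw [mul_assoc, ← sq, ← h]; exact real_inner_le_norm u v
  rcases (norm_nonneg v).eq_or_lt with hv | hv
  · rw [← hv, mul_zero]; exact norm_nonneg u
  · exact le_of_mul_le_mul_right this hv

theorem time_weighted_energy_step {ν δ Δt t : ℝ} (hΔt : 0 < Δt) (hΔtδ : Δt ≤ δ)
    (ht : 0 ≤ t) {w₀ w₁ b p₀ p₁ f : E} {G : F}
    (hmom : (1 / Δt) * ⟪w₁ - w₀, w₁⟫ + ν * ⟪G, G⟫ + ⟪p₀, w₁⟫ = ⟪b, w₁⟫ + ⟪f, w₁⟫)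
    (hp : ⟪w₁, p₀⟫ = δ * ⟪p₁, p₀⟫) (hf : ⟪w₁, f⟫ = δ * ⟪p₁, f⟫)
    (hinc : ⟪w₁ - w₀, p₁ - p₀⟫ = δ * ‖p₁ - p₀‖ ^ 2) :
    t * ‖w₁‖ ^ 2 - (t - Δt) * ‖w₀‖ ^ 2 + (1 / 3) * (t * ‖w₁ - w₀‖ ^ 2)
        + Δt * (t * (2 * ν * ‖G‖ ^ 2 + (1 / 4) * δ * ‖p₁‖ ^ 2))
      ≤ Δt * (‖w₀‖ ^ 2 + ‖w₁‖ ^ 2) + Δt * (t * (t * ‖b‖ ^ 2 + 4 * δ * ‖f‖ ^ 2)) := by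
  have hδ : 0 ≤ δ := hΔt.le.trans hΔtδ
  set Z := p₁ - p₀ with hZ_def
  have energy : t * (‖w₁‖ ^ 2 - ‖w₀‖ ^ 2 + ‖w₁ - w₀‖ ^ 2) + 2 * t * Δt * ν * ‖G‖ ^ 2
        + 2 * t * Δt * δ * ‖p₁‖ ^ 2
      = Δt * (2 * t * ⟪b, w₁⟫) + t * Δt * δ * (2 * ⟪p₁, f⟫) + t * Δt * δ * (2 * ⟪p₁, Z⟫) := by
    rw [← two_mul_inner_sub_self, ← real_inner_self_eq_norm_sq G, ← real_inner_self_eq_norm_sq p₁]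
    rw [real_inner_comm w₁ p₀, hp, real_inner_comm w₁ f, hf] at hmom
    field_simp at hmom
    rw [hZ_def, inner_sub_right]
    linear_combination 2 * t * hmom
  have young_b : 2 * t * ⟪b, w₁⟫ ≤ t ^ 2 * ‖b‖ ^ 2 + ‖w₁‖ ^ 2 := by
    simpa [real_inner_smul_left, norm_smul, mul_pow, abs_of_nonneg ht, mul_assoc]
      using two_mul_inner_le_add_mul_sq one_pos (t • b) w₁
  have young_f : 2 * ⟪p₁, f⟫ ≤ 4⁻¹ * ‖p₁‖ ^ 2 + 4 * ‖f‖ ^ 2 := by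
    simpa using two_mul_inner_le_add_mul_sq (ε := 4⁻¹) (by norm_num) p₁ f
  have young_Z : 2 * ⟪p₁, Z⟫ ≤ (3 / 2) * ‖p₁‖ ^ 2 + (2 / 3) * ‖Z‖ ^ 2 := by
    convert two_mul_inner_le_add_mul_sq (ε := 3 / 2) (by norm_num) p₁ Z using 2; norm_num
  have increment_le : Δt * δ * ‖Z‖ ^ 2 ≤ ‖w₁ - w₀‖ ^ 2 :=
    calc Δt * δ * ‖Z‖ ^ 2 ≤ (δ * ‖Z‖) ^ 2 := by nlinarith [sq_nonneg ‖Z‖]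
      _ ≤ ‖w₁ - w₀‖ ^ 2 := by
        gcongr
        exact mul_norm_le_of_inner_eq hinc
  have htΔtδ : 0 ≤ t * Δt * δ := by positivity
  linarith [mul_le_mul_of_nonneg_left young_f htΔtδ, mul_le_mul_of_nonneg_left young_Z htΔtδ,
    mul_le_mul_of_nonneg_left young_b hΔt.le, mul_le_mul_of_nonneg_left increment_le ht]

theorem time_weighted_energy_step_of_scheme {V : Submodule ℝ E}
    {Q : Type*} [AddCommGroup Q] [Module ℝ Q]
    {gV : V →ₗ[ℝ] F} {gQ : Q →ₗ[ℝ] E} {ν δ Δt : ℝ} (hΔt : 0 < Δt) (hΔtδ : Δt ≤ δ)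
    {w : ℕ → V} {y : ℕ → Q} {b : ℕ → E} {d : ℕ → Q}
    (hscheme1 : ∀ n, ∀ χ : V,
      (1 / Δt) * ⟪(w (n + 1) : E) - (w n : E), (χ : E)⟫
        + ν * ⟪gV (w (n + 1)), gV χ⟫ + ⟪gQ (y n), (χ : E)⟫
      = ⟪b n, (χ : E)⟫ + ⟪gQ (d n), (χ : E)⟫)
    (hscheme2 : ∀ n, ∀ ψ : Q, ⟪(w n : E), gQ ψ⟫ = δ * ⟪gQ (y n), gQ ψ⟫) (j : ℕ) :
    (((j : ℝ) + 1) * Δt) * ‖(w (j + 1) : E)‖ ^ 2 - ((j : ℝ) * Δt) * ‖(w j : E)‖ ^ 2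
        + (1 / 3) * ((((j : ℝ) + 1) * Δt) * ‖(w (j + 1) : E) - (w j : E)‖ ^ 2)
        + Δt * ((((j : ℝ) + 1) * Δt) *
            (2 * ν * ‖gV (w (j + 1))‖ ^ 2 + (1 / 4) * δ * ‖gQ (y (j + 1))‖ ^ 2))
      ≤ Δt * (‖(w j : E)‖ ^ 2 + ‖(w (j + 1) : E)‖ ^ 2)
        + Δt * ((((j : ℝ) + 1) * Δt) *
            ((((j : ℝ) + 1) * Δt) * ‖b j‖ ^ 2 + 4 * δ * ‖gQ (d j)‖ ^ 2)) := by
  have hinc : ⟪(w (j + 1) : E) - w j, gQ (y (j + 1)) - gQ (y j)⟫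
      = δ * ‖gQ (y (j + 1)) - gQ (y j)‖ ^ 2 := by
    rw [← map_sub, inner_sub_left, hscheme2, hscheme2, ← mul_sub, ← inner_sub_left, map_sub,
      real_inner_self_eq_norm_sq]
  have hstep := time_weighted_energy_step hΔt hΔtδ (t := ((j : ℝ) + 1) * Δt) (by positivity)
    (hscheme1 j (w (j + 1))) (hscheme2 (j + 1) (y j)) (hscheme2 (j + 1) (d j)) hinc
  rwa [show ((j : ℝ) + 1) * Δt - Δt = j * Δt by ring] at hstep

end InnerProductSpace

theorem stability_estimate_time_weighted_general
    {E F : Type*} [NormedAddCommGroup E] [InnerProductSpace ℝ E]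
    [NormedAddCommGroup F] [InnerProductSpace ℝ F]
    (V : Submodule ℝ E) {Q : Type*} [AddCommGroup Q] [Module ℝ Q]
    (gV : V →ₗ[ℝ] F) (gQ : Q →ₗ[ℝ] E)
    (ν δ Δt : ℝ) (hΔt : 0 < Δt) (hΔtδ : Δt ≤ δ)
    (w : ℕ → V) (y : ℕ → Q) (b : ℕ → E) (d : ℕ → Q)
    (hscheme1 : ∀ n, ∀ χ : V,
      (1 / Δt) * ⟪(w (n + 1) : E) - (w n : E), (χ : E)⟫
        + ν * ⟪gV (w (n + 1)), gV χ⟫ + ⟪gQ (y n), (χ : E)⟫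
      = ⟪b n, (χ : E)⟫ + ⟪gQ (d n), (χ : E)⟫)
    (hscheme2 : ∀ n, ∀ ψ : Q, ⟪(w n : E), gQ ψ⟫ = δ * ⟪gQ (y n), gQ ψ⟫)
    (n₀ n : ℕ) (hn : n₀ < n) :
    ((n : ℝ) * Δt) * ‖(w n : E)‖ ^ 2
      + (1 / 3) * ∑ j ∈ Finset.Ico n₀ n,
          (((j : ℝ) + 1) * Δt) * ‖(w (j + 1) : E) - (w j : E)‖ ^ 2
      + Δt * ∑ j ∈ Finset.Ico n₀ n,
          (((j : ℝ) + 1) * Δt) *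
            (2 * ν * ‖gV (w (j + 1))‖ ^ 2 + (1 / 4) * δ * ‖gQ (y (j + 1))‖ ^ 2)
    ≤ ((n₀ : ℝ) * Δt) * ‖(w n₀ : E)‖ ^ 2
      + Δt * ∑ j ∈ Finset.Ico n₀ n, (‖(w j : E)‖ ^ 2 + ‖(w (j + 1) : E)‖ ^ 2)
      + Δt * ∑ j ∈ Finset.Ico n₀ n,
          (((j : ℝ) + 1) * Δt) *
            ((((j : ℝ) + 1) * Δt) * ‖b j‖ ^ 2 + 4 * δ * ‖gQ (d j)‖ ^ 2) := by
  have hsum := Finset.sum_le_sum fun j (_ : j ∈ Finset.Ico n₀ n) ↦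
    time_weighted_energy_step_of_scheme hΔt hΔtδ hscheme1 hscheme2 j
  have htel := Finset.sum_Ico_sub (fun i ↦ ((i : ℝ) * Δt) * ‖(w i : E)‖ ^ 2) hn.le
  push_cast at htel
  simp only [Finset.sum_add_distrib, ← Finset.mul_sum] at hsum ⊢
  linarith

/-- Time-weighted stability estimate (49) of Lemma 3 with explicit constants. -/
theorem stability_estimate_time_weighted
    {E F : Type*} [NormedAddCommGroup E] [InnerProductSpace ℝ E] [CompleteSpace E]
    [NormedAddCommGroup F] [InnerProductSpace ℝ F] [CompleteSpace F]
    (V : Submodule ℝ E) {Q : Type*} [AddCommGroup Q] [Module ℝ Q]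
    (gV : V →ₗ[ℝ] F) (gQ : Q →ₗ[ℝ] E)
    (ν δ Δt : ℝ) (hν : 0 < ν) (hδ : 0 < δ) (hΔt : 0 < Δt) (hΔtδ : Δt ≤ δ)
    (w : ℕ → V) (y : ℕ → Q) (b : ℕ → E) (d : ℕ → Q)
    (hscheme1 : ∀ n, ∀ χ : V,
      (1 / Δt) * ⟪(w (n + 1) : E) - (w n : E), (χ : E)⟫
        + ν * ⟪gV (w (n + 1)), gV χ⟫ + ⟪gQ (y n), (χ : E)⟫
      = ⟪b n, (χ : E)⟫ + ⟪gQ (d n), (χ : E)⟫)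
    (hscheme2 : ∀ n, ∀ ψ : Q, ⟪(w n : E), gQ ψ⟫ = δ * ⟪gQ (y n), gQ ψ⟫)
    (n₀ n : ℕ) (hn : n₀ < n) :
    ((n : ℝ) * Δt) * ‖(w n : E)‖ ^ 2
      + (1 / 3) * ∑ j ∈ Finset.Ico n₀ n,
          (((j : ℝ) + 1) * Δt) * ‖(w (j + 1) : E) - (w j : E)‖ ^ 2
      + Δt * ∑ j ∈ Finset.Ico n₀ n,
          (((j : ℝ) + 1) * Δt) *
            (2 * ν * ‖gV (w (j + 1))‖ ^ 2 + (1 / 4) * δ * ‖gQ (y (j + 1))‖ ^ 2)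
    ≤ ((n₀ : ℝ) * Δt) * ‖(w n₀ : E)‖ ^ 2
      + Δt * ∑ j ∈ Finset.Ico n₀ n, (‖(w j : E)‖ ^ 2 + ‖(w (j + 1) : E)‖ ^ 2)
      + Δt * ∑ j ∈ Finset.Ico n₀ n,
          (((j : ℝ) + 1) * Δt) *
            ((((j : ℝ) + 1) * Δt) * ‖b j‖ ^ 2 + 4 * δ * ‖gQ (d j)‖ ^ 2) :=
  stability_estimate_time_weighted_general V gV gQ ν δ Δt hΔt hΔtδ w y b d hscheme1 hscheme2 n₀ n hn
end

section
/- Suppose Δt ≤ δ and the sequences w, y, b, d satisfy the discrete scheme. Then for all natural numbers n₀ < n: (1/2)·Δt·Σ_{j=n₀}^{n−1} ‖(w_{j+1} − w_j)/Δt‖² + ν‖g_V w_n‖² + δ‖g_Q y_n‖² + ν·Σ_{j=n₀}^{n−1} ‖g_V(w_{j+1} − w_j)‖² ≤ ν‖g_V w_{n₀}‖² + δ‖g_Q y_{n₀}‖² + 4·Δt·Σ_{j=n₀}^{n−1} ( ‖b_j‖² + ‖g_Q d_j‖² ). (This is the explicit-constant form of the H¹-type stability estimate (50) of Lemma 3.)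 -/
/-!
Testing the momentum equation with the increment `w (j+1) - w j` and the constraint with `y j`
turns one step of the scheme into an energy identity, through
`2⟪a, a - c⟫ = ‖a‖² - ‖c‖² + ‖a - c‖²` for the viscous term and the pressure term alike.
The pressure enters with the wrong sign only through `δ‖gQ (y (j+1) - y j)‖²`; testing the
constraint with `y (j+1) - y j` bounds `δ‖gQ (y (j+1) - y j)‖` by `‖w (j+1) - w j‖`, so with
`Δt ≤ δ` this term is absorbed by the discrete time derivative. Young's inequality on the source
then gives a one-step inequality, and summing it telescopes.
-/

open RealInnerProductSpace Finset

section InnerProduct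

variable {E : Type*} [NormedAddCommGroup E] [InnerProductSpace ℝ E]

theorem two_mul_inner_sub_right_self (a c : E) :
    2 * ⟪a, a - c⟫ = ‖a‖ ^ 2 - ‖c‖ ^ 2 + ‖a - c‖ ^ 2 := by
  rw [inner_sub_right, real_inner_self_eq_norm_sq, norm_sub_sq_real]
  ring

theorem two_mul_inner_sub_left_self (p q : E) :
    2 * ⟪p - q, q⟫ = ‖p‖ ^ 2 - ‖q‖ ^ 2 - ‖p - q‖ ^ 2 := by
  rw [inner_sub_left, real_inner_self_eq_norm_sq, norm_sub_sq_real]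
  ring

theorem mul_norm_le_of_inner_eq_mul_norm_sq {δ : ℝ} {x u : E}
    (h : ⟪x, u⟫ = δ * ‖u‖ ^ 2) : δ * ‖u‖ ≤ ‖x‖ := by
  rcases (norm_nonneg u).eq_or_lt with hu | hu
  · rw [← hu, mul_zero]
    exact norm_nonneg x
  · refine le_of_mul_le_mul_right ?_ hu
    calc δ * ‖u‖ * ‖u‖ = ⟪x, u⟫ := by rw [h]; ring
      _ ≤ ‖x‖ * ‖u‖ := real_inner_le_norm x u

theorem real_inner_le_mul_norm_sq_add_div {t : ℝ} (ht : 0 < t) (f x : E) :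
    ⟪f, x⟫ ≤ t * ‖f‖ ^ 2 + ‖x‖ ^ 2 / (4 * t) :=
  calc ⟪f, x⟫ ≤ ‖f‖ * ‖x‖ := real_inner_le_norm f x
    _ = t * ‖f‖ ^ 2 + ‖x‖ ^ 2 / (4 * t) - (2 * t * ‖f‖ - ‖x‖) ^ 2 / (4 * t) := by
      field_simp
      ring
    _ ≤ t * ‖f‖ ^ 2 + ‖x‖ ^ 2 / (4 * t) := sub_le_self _ (by positivity)

end InnerProduct

theorem Finset.sum_Ico_add_le_of_forall_add_le {α : Type*} [AddCommMonoid α]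
    [PartialOrder α] [IsOrderedAddMonoid α] {e u r : ℕ → α}
    (h : ∀ j, e j + u (j + 1) ≤ u j + r j) {m n : ℕ} (hmn : m ≤ n) :
    ∑ j ∈ Ico m n, e j + u n ≤ u m + ∑ j ∈ Ico m n, r j := by
  induction n, hmn using Nat.le_induction with
  | base => simp
  | succ n hmn ih =>
    rw [sum_Ico_succ_top hmn, sum_Ico_succ_top hmn]
    calc ∑ j ∈ Ico m n, e j + e n + u (n + 1)
        = ∑ j ∈ Ico m n, e j + (e n + u (n + 1)) := add_assoc ..
      _ ≤ ∑ j ∈ Ico m n, e j + (u n + r n) := add_le_add le_rfl (h n)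
      _ = (∑ j ∈ Ico m n, e j + u n) + r n := (add_assoc ..).symm
      _ ≤ (u m + ∑ j ∈ Ico m n, r j) + r n := add_le_add ih le_rfl
      _ = u m + (∑ j ∈ Ico m n, r j + r n) := add_assoc ..

section Scheme

variable {E F Q : Type*} [NormedAddCommGroup E] [InnerProductSpace ℝ E]
  [NormedAddCommGroup F] [InnerProductSpace ℝ F] [AddCommGroup Q] [Module ℝ Q]
  {gQ : Q →ₗ[ℝ] E} {δ : ℝ}

theorem inner_sub_map_eq_of_forall_inner_map_eq {x₀ x₁ : E} {y₀ y₁ : Q}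
    (h₀ : ∀ ψ, ⟪x₀, gQ ψ⟫ = δ * ⟪gQ y₀, gQ ψ⟫) (h₁ : ∀ ψ, ⟪x₁, gQ ψ⟫ = δ * ⟪gQ y₁, gQ ψ⟫)
    (ψ : Q) : ⟪x₁ - x₀, gQ ψ⟫ = δ * ⟪gQ y₁ - gQ y₀, gQ ψ⟫ := by
  rw [inner_sub_left, inner_sub_left, h₀, h₁, mul_sub]

theorem scheme_step_energy_le {V : Submodule ℝ E} {gV : V →ₗ[ℝ] F} {ν Δt : ℝ} (hΔt : 0 < Δt)
    (hΔtδ : Δt ≤ δ) {w₀ w₁ : V} {y₀ y₁ : Q} {f : E}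
    (hmom : ∀ χ : V, (1 / Δt) * ⟪(w₁ : E) - w₀, χ⟫ + ν * ⟪gV w₁, gV χ⟫ + ⟪gQ y₀, (χ : E)⟫
      = ⟪f, χ⟫)
    (hdiv₀ : ∀ ψ, ⟪(w₀ : E), gQ ψ⟫ = δ * ⟪gQ y₀, gQ ψ⟫)
    (hdiv₁ : ∀ ψ, ⟪(w₁ : E), gQ ψ⟫ = δ * ⟪gQ y₁, gQ ψ⟫) :
    (1 / 2) * Δt * ‖Δt⁻¹ • ((w₁ : E) - w₀)‖ ^ 2 + ν * ‖gV w₁ - gV w₀‖ ^ 2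
        + (ν * ‖gV w₁‖ ^ 2 + δ * ‖gQ y₁‖ ^ 2)
      ≤ ν * ‖gV w₀‖ ^ 2 + δ * ‖gQ y₀‖ ^ 2 + 2 * Δt * ‖f‖ ^ 2 := by
  have hinc := inner_sub_map_eq_of_forall_inner_map_eq hdiv₀ hdiv₁
  have hδ : 0 ≤ δ := hΔt.le.trans hΔtδ
  have henergy : ‖(w₁ : E) - w₀‖ ^ 2 / Δt + ν * ⟪gV w₁, gV w₁ - gV w₀⟫
      + δ * ⟪gQ y₁ - gQ y₀, gQ y₀⟫ = ⟪f, (w₁ : E) - w₀⟫ := by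
    have := hmom (w₁ - w₀)
    rwa [Submodule.coe_sub, map_sub, real_inner_comm _ (gQ y₀), hinc, one_div_mul_eq_div,
      real_inner_self_eq_norm_sq] at this
  have habsorb : δ * ‖gQ y₁ - gQ y₀‖ ^ 2 ≤ ‖(w₁ : E) - w₀‖ ^ 2 / Δt := by
    have hpq : δ * ‖gQ y₁ - gQ y₀‖ ≤ ‖(w₁ : E) - w₀‖ :=
      mul_norm_le_of_inner_eq_mul_norm_sq <| by
        rw [← map_sub, hinc, map_sub, real_inner_self_eq_norm_sq]
    rw [le_div_iff₀ hΔt]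
    calc δ * ‖gQ y₁ - gQ y₀‖ ^ 2 * Δt ≤ δ * ‖gQ y₁ - gQ y₀‖ ^ 2 * δ := by gcongr
      _ = (δ * ‖gQ y₁ - gQ y₀‖) ^ 2 := by ring
      _ ≤ ‖(w₁ : E) - w₀‖ ^ 2 := by gcongr
  have hyoung : ⟪f, (w₁ : E) - w₀⟫ ≤ Δt * ‖f‖ ^ 2 + ‖(w₁ : E) - w₀‖ ^ 2 / Δt / 4 := by
    rw [div_div, mul_comm Δt 4]
    exact real_inner_le_mul_norm_sq_add_div hΔt f _
  have hkinetic : (1 / 2) * Δt * ‖Δt⁻¹ • ((w₁ : E) - w₀)‖ ^ 2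
      = ‖(w₁ : E) - w₀‖ ^ 2 / Δt / 2 := by
    rw [norm_smul, norm_inv, Real.norm_of_nonneg hΔt.le]
    field_simp
  linear_combination hkinetic + 2 * henergy + 2 * hyoung + habsorb
    - ν * two_mul_inner_sub_right_self (gV w₁) (gV w₀)
    - δ * two_mul_inner_sub_left_self (gQ y₁) (gQ y₀)

end Scheme

theorem stability_estimate_h1_general
    {E F : Type*} [NormedAddCommGroup E] [InnerProductSpace ℝ E]
    [NormedAddCommGroup F] [InnerProductSpace ℝ F]
    (V : Submodule ℝ E) {Q : Type*} [AddCommGroup Q] [Module ℝ Q]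
    (gV : V →ₗ[ℝ] F) (gQ : Q →ₗ[ℝ] E)
    (ν δ Δt : ℝ) (hΔt : 0 < Δt) (hΔtδ : Δt ≤ δ)
    (w : ℕ → V) (y : ℕ → Q) (b : ℕ → E) (d : ℕ → Q)
    (hscheme1 : ∀ n, ∀ χ : V,
      (1 / Δt) * ⟪(w (n + 1) : E) - (w n : E), (χ : E)⟫
        + ν * ⟪gV (w (n + 1)), gV χ⟫ + ⟪gQ (y n), (χ : E)⟫
      = ⟪b n, (χ : E)⟫ + ⟪gQ (d n), (χ : E)⟫)
    (hscheme2 : ∀ n, ∀ ψ : Q, ⟪(w n : E), gQ ψ⟫ = δ * ⟪gQ (y n), gQ ψ⟫)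
    (n₀ n : ℕ) (hn : n₀ < n) :
    (1 / 2) * Δt * ∑ j ∈ Finset.Ico n₀ n,
        ‖(Δt)⁻¹ • ((w (j + 1) : E) - (w j : E))‖ ^ 2
      + ν * ‖gV (w n)‖ ^ 2 + δ * ‖gQ (y n)‖ ^ 2
      + ν * ∑ j ∈ Finset.Ico n₀ n, ‖gV (w (j + 1)) - gV (w j)‖ ^ 2
    ≤ ν * ‖gV (w n₀)‖ ^ 2 + δ * ‖gQ (y n₀)‖ ^ 2
      + 4 * Δt * ∑ j ∈ Finset.Ico n₀ n, (‖b j‖ ^ 2 + ‖gQ (d j)‖ ^ 2) := by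
  have hstep (j : ℕ) :
      (1 / 2) * Δt * ‖Δt⁻¹ • ((w (j + 1) : E) - w j)‖ ^ 2
          + ν * ‖gV (w (j + 1)) - gV (w j)‖ ^ 2
          + (ν * ‖gV (w (j + 1))‖ ^ 2 + δ * ‖gQ (y (j + 1))‖ ^ 2)
        ≤ ν * ‖gV (w j)‖ ^ 2 + δ * ‖gQ (y j)‖ ^ 2
          + 4 * Δt * (‖b j‖ ^ 2 + ‖gQ (d j)‖ ^ 2) := by
    have hsource : ‖b j + gQ (d j)‖ ^ 2 ≤ 2 * (‖b j‖ ^ 2 + ‖gQ (d j)‖ ^ 2) :=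
      (pow_le_pow_left₀ (norm_nonneg _) (norm_add_le _ _) 2).trans add_sq_le
    have := scheme_step_energy_le hΔt hΔtδ (f := b j + gQ (d j))
      (fun χ ↦ by rw [hscheme1 j χ, inner_add_left]) (hscheme2 j) (hscheme2 (j + 1))
    linarith [mul_le_mul_of_nonneg_left hsource (by positivity : (0 : ℝ) ≤ 2 * Δt)]
  have := Finset.sum_Ico_add_le_of_forall_add_le
    (u := fun j ↦ ν * ‖gV (w j)‖ ^ 2 + δ * ‖gQ (y j)‖ ^ 2) hstep hn.le
  rw [sum_add_distrib, ← mul_sum, ← mul_sum, ← mul_sum] at this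
  linarith

/-- H¹-type stability estimate (50) of Lemma 3 with explicit constants. -/
theorem stability_estimate_h1
    {E F : Type*} [NormedAddCommGroup E] [InnerProductSpace ℝ E] [CompleteSpace E]
    [NormedAddCommGroup F] [InnerProductSpace ℝ F] [CompleteSpace F]
    (V : Submodule ℝ E) {Q : Type*} [AddCommGroup Q] [Module ℝ Q]
    (gV : V →ₗ[ℝ] F) (gQ : Q →ₗ[ℝ] E)
    (ν δ Δt : ℝ) (hν : 0 < ν) (hδ : 0 < δ) (hΔt : 0 < Δt) (hΔtδ : Δt ≤ δ)
    (w : ℕ → V) (y : ℕ → Q) (b : ℕ → E) (d : ℕ → Q)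
    (hscheme1 : ∀ n, ∀ χ : V,
      (1 / Δt) * ⟪(w (n + 1) : E) - (w n : E), (χ : E)⟫
        + ν * ⟪gV (w (n + 1)), gV χ⟫ + ⟪gQ (y n), (χ : E)⟫
      = ⟪b n, (χ : E)⟫ + ⟪gQ (d n), (χ : E)⟫)
    (hscheme2 : ∀ n, ∀ ψ : Q, ⟪(w n : E), gQ ψ⟫ = δ * ⟪gQ (y n), gQ ψ⟫)
    (n₀ n : ℕ) (hn : n₀ < n) :
    (1 / 2) * Δt * ∑ j ∈ Finset.Ico n₀ n,
        ‖(Δt)⁻¹ • ((w (j + 1) : E) - (w j : E))‖ ^ 2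
      + ν * ‖gV (w n)‖ ^ 2 + δ * ‖gQ (y n)‖ ^ 2
      + ν * ∑ j ∈ Finset.Ico n₀ n, ‖gV (w (j + 1)) - gV (w j)‖ ^ 2
    ≤ ν * ‖gV (w n₀)‖ ^ 2 + δ * ‖gQ (y n₀)‖ ^ 2
      + 4 * Δt * ∑ j ∈ Finset.Ico n₀ n, (‖b j‖ ^ 2 + ‖gQ (d j)‖ ^ 2) :=
  stability_estimate_h1_general V gV gQ ν δ Δt hΔt hΔtδ w y b d hscheme1 hscheme2 n₀ n hn
end
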